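/- arXiv:math/0503251 — 2 statements merged into one kernel-verified Lean document; each statement's English description precedes it below -/
import Mathlib

section
/- Let d ≥ 1, D ≥ 1, and let (A_n)_{n≥1} be rotor-router aggregation in ℤ^d built from any configuration of rotor stacks with discrepancy at most D, and let T_n be the total number of steps taken by the first n particles. Then for all n ≥ 1, ψ(A_n) ≤ T_n + 8√d · D · ∑_{x ∈ A_n} ‖x‖ + 4 d D n. -/
open scoped BigOperators Pointwise symmDiff
open MeasureTheory Filter

noncomputable section
open scoped Classical
namespace RotorRouterPaper

/-- Sites of the lattice `ℤ^d`. -/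
abbrev Site (d : ℕ) := Fin d → ℤ

/-- The `i`-th standard basis vector of `ℤ^d`. -/
def unitVec (d : ℕ) (i : Fin d) : Site d := fun j => if j = i then 1 else 0

/-- Squared Euclidean norm of a lattice point. -/
def nsq {d : ℕ} (x : Site d) : ℝ := ∑ i, ((x i : ℝ)) ^ 2

/-- Euclidean norm of a lattice point. -/
def enorm {d : ℕ} (x : Site d) : ℝ := Real.sqrt (nsq x)

/-- Adjacency `x ∼ y`: Euclidean distance one. -/
def Adj {d : ℕ} (x y : Site d) : Prop := nsq (x - y) = 1

/-- `ω_d`, the Lebesgue volume of the unit ball in `ℝ^d`. -/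
def ballVol (d : ℕ) : ℝ := (volume (Metric.ball (0 : EuclideanSpace ℝ (Fin d)) 1)).toReal

/-- The lattice ball `B_n = {y ∈ ℤ^d : ω_d ‖y‖^d < n}`. -/
def lball (d n : ℕ) : Set (Site d) := {y | ballVol d * enorm y ^ d < (n : ℝ)}

/-- Characterization of the expected exit time function of a (finite) region `A ⊆ ℤ^d`:
it vanishes off `A` and its discrete Laplacian is `-1` on `A`. -/
def IsExitFun (d : ℕ) (A : Set (Site d)) (e : Site d → ℝ) : Prop :=
  (∀ x, x ∉ A → e x = 0) ∧
  ∀ x ∈ A, (1 / (2 * (d : ℝ))) * (∑ i, (e (x + unitVec d i) + e (x - unitVec d i))) - e x = -1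

/-- The expected exit time function `x ↦ e_x(A)` (the unique function satisfying
`IsExitFun` when `A` is finite). -/
def exitFun (d : ℕ) (A : Set (Site d)) : Site d → ℝ :=
  if h : ∃ e, IsExitFun d A e then h.choose else 0

/-- `ē(A) = sup_x e_x(A)`. -/
def ebar (d : ℕ) (A : Set (Site d)) : ℝ := sSup (Set.range (exitFun d A))

/-- `φ(n) = sup {ē(A) - e_o(B_n) : A ⊆ ℤ^d, |A| = n}`. -/
def phi (d n : ℕ) : ℝ :=
  sSup {t | ∃ A : Set (Site d), A.Finite ∧ A.ncard = n ∧ t = ebar d A - exitFun d (lball d n) 0}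

/-- `Φ(n) = ∑_{j=1}^n φ(j)`. -/
def PhiSum (d n : ℕ) : ℝ := ∑ j ∈ Finset.Icc 1 n, phi d j

/-- `ψ(A) = ∑_{x ∈ A} ‖x‖²`. -/
def psi {d : ℕ} (A : Set (Site d)) : ℝ := ∑ᶠ x ∈ A, nsq x

/-- A cardinal direction in `ℤ^d`: one of `±e_1, …, ±e_d`. -/
abbrev Dir (d : ℕ) := Fin d × Bool

/-- The lattice step vector of a cardinal direction. -/
def dirVec (d : ℕ) (ε : Dir d) : Site d := if ε.2 then unitVec d ε.1 else -unitVec d ε.1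

/-- A configuration of rotor stacks `r` (with `r x i` the direction used for the
`(i+1)`-st visit to `x`) has discrepancy at most `D` if for every site, direction and `m ≥ 1`,
among the first `m` rotors of the stack each direction occurs `m/(2d)` times up to error `D`. -/
def HasDiscrepancy (d : ℕ) (D : ℝ) (r : Site d → ℕ → Dir d) : Prop :=
  ∀ (x : Site d) (ε : Dir d) (m : ℕ), 1 ≤ m →
    |(({i | i < m ∧ r x i = ε} : Set ℕ).ncard : ℝ) - (m : ℝ) / (2 * (d : ℝ))| ≤ D

/-- One step of rotor-router walk on a state (current position, visit counts so far):
the particle at `p` being visited for the `(c p + 1)`-st time moves in direction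
`r p (c p)` and the visit count at `p` increases by one. -/
def rstep {d : ℕ} (r : Site d → ℕ → Dir d) (s : Site d × (Site d → ℕ)) :
    Site d × (Site d → ℕ) :=
  (s.1 + dirVec d (r s.1 (s.2 s.1)), Function.update s.2 s.1 (s.2 s.1 + 1))

/-- The state after `t` steps of rotor-router walk started at the origin with visit counts `c`. -/
def walkState {d : ℕ} (r : Site d → ℕ → Dir d) (c : Site d → ℕ) (t : ℕ) :
    Site d × (Site d → ℕ) :=
  (rstep r)^[t] (0, c)

/-- The number of steps until the rotor-router walk started at the origin
(with carried-over visit counts `c`) first leaves the region `A`. -/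
def exitSteps {d : ℕ} (r : Site d → ℕ → Dir d) (A : Set (Site d)) (c : Site d → ℕ) : ℕ :=
  sInf {t | (walkState r c t).1 ∉ A}

/-- The state of rotor-router aggregation after `n` particles have walked and settled:
`(aggState r n).1` is the occupied region `A_{n+1}`, `(aggState r n).2.1` the accumulated
visit counts, and `(aggState r n).2.2` the total number `T_n` of steps taken so far. -/
def aggState {d : ℕ} (r : Site d → ℕ → Dir d) : ℕ → Set (Site d) × (Site d → ℕ) × ℕ
  | 0 => ({0}, fun _ => 0, 0)
  | n + 1 =>
      let s := aggState r n
      let τ := exitSteps r s.1 s.2.1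
      (insert (walkState r s.2.1 τ).1 s.1, (walkState r s.2.1 τ).2, s.2.2 + τ)

/-- The region `A_n` of rotor-router aggregation (for `n ≥ 1`). -/
def aggRegion {d : ℕ} (r : Site d → ℕ → Dir d) (n : ℕ) : Set (Site d) :=
  (aggState r (n - 1)).1

/-- `T_n`, the total number of steps taken by the first `n` particles. -/
def totalSteps {d : ℕ} (r : Site d → ℕ → Dir d) (n : ℕ) : ℕ := (aggState r n).2.2

/-- `A^□ = A + [-1/2,1/2]^d ⊆ ℝ^d`. -/
def box (d : ℕ) (A : Set (Site d)) : Set (EuclideanSpace ℝ (Fin d)) :=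
  {z | ∃ x ∈ A, ∀ i, |z i - (x i : ℝ)| ≤ 1 / 2}

/-- The closed Euclidean ball of unit volume centered at the origin of `ℝ^d`. -/
def unitVolBall (d : ℕ) : Set (EuclideanSpace ℝ (Fin d)) :=
  Metric.closedBall 0 (ballVol d ^ (-(1 : ℝ) / (d : ℝ)))

/-- `A ⊆ ℤ^d` is orthoconvex if every line parallel to a coordinate axis meets `A`
in an interval. -/
def Orthoconvex (d : ℕ) (A : Set (Site d)) : Prop :=
  ∀ x ∈ A, ∀ i : Fin d, ∀ k : ℤ, 0 < k → x + k • unitVec d i ∈ A →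
    ∀ j : ℤ, 0 < j → j < k → x + j • unitVec d i ∈ A

/-- The nonnegative orthant `Q ⊆ ℤ^d`. -/
def orthant (d : ℕ) : Set (Site d) := {x | ∀ i, 0 ≤ x i}

/-- The cube `C(o,r) = {x : ‖x‖_∞ ≤ r}`. -/
def cubeSet (d : ℕ) (r : ℕ) : Set (Site d) := {x | ∀ i, |x i| ≤ (r : ℤ)}

/-- The boundary `∂C(o,r) = {x : ‖x‖_∞ = r + 1 and x ∼ y for some y ∈ C(o,r)}`. -/
def cubeBdry (d : ℕ) (r : ℕ) : Set (Site d) :=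
  {x | (∀ i, |x i| ≤ (r : ℤ) + 1) ∧ (∃ i, |x i| = (r : ℤ) + 1) ∧ ∃ y ∈ cubeSet d r, Adj x y}

/-- Characterization of `h_r(x) = P_x(T_Q > T_{∂C(o,r)})`: it vanishes on
`Q ∩ (C(o,r) ∪ ∂C(o,r))`, equals `1` on `∂C(o,r) ∖ Q`, is discrete harmonic on
`C(o,r) ∖ Q`, and (as a normalization) vanishes off `C(o,r) ∪ ∂C(o,r)`. -/
def IsOrthHarm (d : ℕ) (r : ℕ) (h : Site d → ℝ) : Prop :=
  (∀ x, x ∉ cubeSet d r ∪ cubeBdry d r → h x = 0) ∧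
  (∀ x ∈ orthant d ∩ (cubeSet d r ∪ cubeBdry d r), h x = 0) ∧
  (∀ x ∈ cubeBdry d r \ orthant d, h x = 1) ∧
  (∀ x ∈ cubeSet d r \ orthant d,
    h x = (1 / (2 * (d : ℝ))) * ∑ i, (h (x + unitVec d i) + h (x - unitVec d i)))

/-- The function `h_r` of the previous characterization. -/
def orthHarm (d : ℕ) (r : ℕ) : Site d → ℝ :=
  if h : ∃ f, IsOrthHarm d r f then h.choose else 0

/-- `p(k,r) = sup {h_r(x) : ‖x‖_∞ ≤ k}`. -/
def pkr (d k r : ℕ) : ℝ :=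
  sSup {t | ∃ x : Site d, (∀ i, |x i| ≤ (k : ℤ)) ∧ t = orthHarm d r x}

/-- The exponent `γ_d` of Theorem 3.1. -/
def gam (d : ℕ) : ℝ :=
  if d = 1 then 1 else if d = 2 then 1 / 3
  else (2 : ℝ) ^ (-(d : ℝ)) / (2 * (d : ℝ) ^ 2 * Real.log 3)

/-!
Each rotor-router step from `x` in direction `ε` raises `‖·‖²` by `2⟨x, ε⟩ + 1`. Summed over
all steps of the first particles, the final positions — which make up the cluster — therefore
have `ψ(A_n) ≤ T_n + 2 ∑_x ∑_{i < c(x)} ⟨x, r_i(x)⟩`, where `c(x)` counts the visits to `x`.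
The directions `ε` and `-ε` cancel in `∑_ε ⟨x, ε⟩`, so by the discrepancy bound the inner sum
is at most `D ∑_ε |⟨x, ε⟩| = 2 D ‖x‖₁ ≤ 2 √d D ‖x‖`.
-/

theorem abs_sum_comp_le_of_abs_card_filter_sub_le {ι α : Type*} [Fintype α] [DecidableEq α]
    (g : α → ℝ) (hg : ∑ a, g a = 0) (ρ : ι → α) (s : Finset ι) {q D : ℝ}
    (hρ : ∀ a, |((s.filter (ρ · = a)).card : ℝ) - q| ≤ D) :
    |∑ i ∈ s, g (ρ i)| ≤ D * ∑ a, |g a| := by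
  have hfiber : ∑ i ∈ s, g (ρ i) = ∑ a, (((s.filter (ρ · = a)).card : ℝ) - q) * g a := by
    simp only [sub_mul, Finset.sum_sub_distrib, ← Finset.mul_sum, hg, mul_zero, sub_zero]
    rw [← Finset.sum_fiberwise_of_maps_to' (fun i _ => Finset.mem_univ (ρ i)) g]
    simp only [Finset.sum_const, nsmul_eq_mul]
  calc |∑ i ∈ s, g (ρ i)|
      ≤ ∑ a, |((s.filter (ρ · = a)).card : ℝ) - q| * |g a| := by
        rw [hfiber]
        simpa only [abs_mul] using
          Finset.abs_sum_le_sum_abs (fun a => (((s.filter (ρ · = a)).card : ℝ) - q) * g a) _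
    _ ≤ D * ∑ a, |g a| := by
        rw [Finset.mul_sum]
        gcongr with a
        exact hρ a

section RotorWalk

variable {d : ℕ}

lemma nsq_nonneg (x : Site d) : 0 ≤ nsq x :=
  Finset.sum_nonneg fun _ _ => sq_nonneg _

lemma sum_abs_le_sqrt_mul_enorm (x : Site d) : ∑ j, |(x j : ℝ)| ≤ Real.sqrt d * enorm x := by
  rw [enorm, ← Real.sqrt_mul (Nat.cast_nonneg d),
    Real.le_sqrt (Finset.sum_nonneg fun _ _ => abs_nonneg _) (by positivity [nsq_nonneg x])]
  simpa [nsq, sq_abs] using sq_sum_le_card_mul_sum_sq (s := Finset.univ)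
    (f := fun j => |(x j : ℝ)|)

def dirInner (x : Site d) (ε : Dir d) : ℝ := if ε.2 then (x ε.1 : ℝ) else -(x ε.1 : ℝ)

lemma sum_dirInner (x : Site d) : ∑ ε : Dir d, dirInner x ε = 0 := by
  simp [Fintype.sum_prod_type, dirInner]

lemma sum_abs_dirInner (x : Site d) : ∑ ε : Dir d, |dirInner x ε| = 2 * ∑ j, |(x j : ℝ)| := by
  simp [Fintype.sum_prod_type, dirInner, Finset.mul_sum, two_mul]

lemma nsq_add_dirVec (x : Site d) (ε : Dir d) :
    nsq (x + dirVec d ε) = nsq x + 2 * dirInner x ε + 1 := by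
  obtain ⟨i, _ | _⟩ := ε <;>
    simp [nsq, dirVec, dirInner, unitVec, apply_ite (fun z : ℤ => (z : ℝ)), add_sq,
      Finset.sum_add_distrib]

variable (r : Site d → ℕ → Dir d)

/-- `∑_{i < m} ⟨x, r_i(x)⟩`: what the first `m` departures from `x` contribute to `‖·‖²` beyond
one per step. -/
def rotorSum (x : Site d) (m : ℕ) : ℝ := ∑ i ∈ Finset.range m, dirInner x (r x i)

lemma abs_rotorSum_le {D : ℝ} (hD : 0 ≤ D) (hr : HasDiscrepancy d D r) (x : Site d) (m : ℕ) :
    |rotorSum r x m| ≤ 2 * Real.sqrt d * D * enorm x := by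
  rcases Nat.eq_zero_or_pos m with rfl | hm
  · simp only [rotorSum, Finset.range_zero, Finset.sum_empty, abs_zero]
    exact mul_nonneg (by positivity) (Real.sqrt_nonneg _)
  have hcount : ∀ ε, |(((Finset.range m).filter (r x · = ε)).card : ℝ) - m / (2 * d)| ≤ D := by
    intro ε
    simpa [← Set.ncard_coe_finset, Set.ofPred_and] using hr x ε m hm
  calc |rotorSum r x m|
      ≤ D * ∑ ε, |dirInner x ε| :=
        abs_sum_comp_le_of_abs_card_filter_sub_le _ (sum_dirInner x) _ _ hcount
    _ ≤ D * (2 * (Real.sqrt d * enorm x)) := by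
        rw [sum_abs_dirInner]
        gcongr
        exact sum_abs_le_sqrt_mul_enorm x
    _ = 2 * Real.sqrt d * D * enorm x := by ring

def rotorPotential (S : Finset (Site d)) (c : Site d → ℕ) : ℝ :=
  ∑ x ∈ S, rotorSum r x (c x)

lemma rotorPotential_rstep {S : Finset (Site d)} {s : Site d × (Site d → ℕ)} (hs : s.1 ∈ S) :
    rotorPotential r S (rstep r s).2 = rotorPotential r S s.2 + dirInner s.1 (r s.1 (s.2 s.1)) := by
  have hoff : ∀ x ∈ S.erase s.1, rotorSum r x ((rstep r s).2 x) = rotorSum r x (s.2 x) :=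
    fun x hx => by dsimp only [rstep]; rw [Function.update_of_ne (Finset.ne_of_mem_erase hx)]
  rw [rotorPotential, rotorPotential, ← Finset.add_sum_erase _ _ hs, Finset.sum_congr rfl hoff,
    ← Finset.add_sum_erase _ _ hs]
  dsimp only [rstep]
  rw [Function.update_self, rotorSum, rotorSum, Finset.sum_range_succ]
  ring

lemma nsq_rstep (s : Site d × (Site d → ℕ)) :
    nsq (rstep r s).1 = nsq s.1 + 2 * dirInner s.1 (r s.1 (s.2 s.1)) + 1 :=
  nsq_add_dirVec _ _

lemma nsq_iterate_rstep {S : Finset (Site d)} {s : Site d × (Site d → ℕ)} {t : ℕ}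
    (hS : ∀ k < t, ((rstep r)^[k] s).1 ∈ S) :
    nsq ((rstep r)^[t] s).1 =
      nsq s.1 + t + 2 * (rotorPotential r S ((rstep r)^[t] s).2 - rotorPotential r S s.2) := by
  induction t with
  | zero => simp
  | succ t ih =>
    rw [Function.iterate_succ_apply', nsq_rstep, rotorPotential_rstep r (hS t t.lt_succ_self),
      ih fun k hk => hS k (hk.trans t.lt_succ_self)]
    push_cast
    ring

lemma walkState_mem_of_lt_exitSteps {A : Set (Site d)} {c : Site d → ℕ} {k : ℕ}
    (hk : k < exitSteps r A c) : (walkState r c k).1 ∈ A := by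
  simpa using Nat.notMem_of_lt_sInf hk

end RotorWalk

section Aggregation

variable {d : ℕ} (r : Site d → ℕ → Dir d)

lemma nsq_exitSteps {A : Set (Site d)} {S : Finset (Site d)} (hAS : A ⊆ S) (c : Site d → ℕ) :
    nsq (walkState r c (exitSteps r A c)).1 = exitSteps r A c +
      2 * (rotorPotential r S (walkState r c (exitSteps r A c)).2 - rotorPotential r S c) := by
  rw [walkState, nsq_iterate_rstep r fun k hk => hAS (walkState_mem_of_lt_exitSteps r hk)]
  simp [nsq]

lemma psi_insert_le {A : Set (Site d)} (hA : A.Finite) (y : Site d) :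
    psi (insert y A) ≤ nsq y + psi A := by
  by_cases hy : y ∈ A
  · rw [Set.insert_eq_of_mem hy]
    linarith [nsq_nonneg y]
  · exact (finsum_mem_insert nsq hy hA).le

lemma aggState_fst_finite (n : ℕ) : (aggState r n).1.Finite := by
  induction n with
  | zero => exact Set.finite_singleton _
  | succ n ih => exact ih.insert _

lemma totalSteps_mono : Monotone (totalSteps r) :=
  monotone_nat_of_le_succ fun _ => Nat.le_add_right _ _

lemma psi_aggState_le (n : ℕ) {S : Finset (Site d)} (hS : (aggState r n).1 ⊆ S) :
    psi (aggState r n).1 ≤ totalSteps r n + 2 * rotorPotential r S (aggState r n).2.1 := by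
  induction n with
  | zero => simp [aggState, totalSteps, psi, nsq, rotorPotential, rotorSum]
  | succ n ih =>
    have hA : (aggState r n).1 ⊆ S := (Set.subset_insert _ _).trans hS
    have hexit := nsq_exitSteps r hA (aggState r n).2.1
    have hinsert := psi_insert_le (aggState_fst_finite r n)
      (walkState r (aggState r n).2.1 (exitSteps r (aggState r n).1 (aggState r n).2.1)).1
    simp only [totalSteps, aggState, Nat.cast_add] at ih hinsert ⊢
    linarith [ih hA]

end Aggregation

theorem lemma_time_general (d : ℕ) (D : ℝ) (hD : 1 ≤ D)
    (r : Site d → ℕ → Dir d) (hr : HasDiscrepancy d D r) (n : ℕ) :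
    psi (aggRegion r n) ≤ (totalSteps r n : ℝ)
      + 8 * Real.sqrt d * D * (∑ᶠ x ∈ aggRegion r n, enorm x) + 4 * (d : ℝ) * D * (n : ℝ) := by
  have hD0 : 0 ≤ D := zero_le_one.trans hD
  have hA := aggState_fst_finite r (n - 1)
  have hpsi := psi_aggState_le r (n - 1) (S := hA.toFinset) (by simp)
  have hT : (totalSteps r (n - 1) : ℝ) ≤ totalSteps r n := by
    exact_mod_cast totalSteps_mono r (Nat.sub_le n 1)
  have hrotor : rotorPotential r hA.toFinset (aggState r (n - 1)).2.1
      ≤ 2 * Real.sqrt d * D * ∑ x ∈ hA.toFinset, enorm x := by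
    rw [Finset.mul_sum]
    exact Finset.sum_le_sum fun x _ => (le_abs_self _).trans (abs_rotorSum_le r hD0 hr x _)
  rw [aggRegion, finsum_mem_eq_finite_toFinset_sum _ hA]
  have hnorm : 0 ≤ Real.sqrt d * D * ∑ x ∈ hA.toFinset, enorm x :=
    mul_nonneg (by positivity) (Finset.sum_nonneg fun _ _ => Real.sqrt_nonneg _)
  have hdn : 0 ≤ (d : ℝ) * D * n := by positivity
  linarith

theorem lemma_time (d : ℕ) (hd : 1 ≤ d) (D : ℝ) (hD : 1 ≤ D)
    (r : Site d → ℕ → Dir d) (hr : HasDiscrepancy d D r) (n : ℕ) (hn : 1 ≤ n) :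
    psi (aggRegion r n) ≤ (totalSteps r n : ℝ)
      + 8 * Real.sqrt d * D * (∑ᶠ x ∈ aggRegion r n, enorm x) + 4 * (d : ℝ) * D * (n : ℝ) :=
  lemma_time_general d D hD r hr n

end RotorRouterPaper
end
end

section
/- For every d ≥ 1 and every n ≥ 1 there exists an orthoconvex set A ⊆ ℤ^d with |A| = n such that ē(A) ≥ ē(A') for every finite set A' ⊆ ℤ^d with |A'| = n. -/
open scoped BigOperators Pointwise symmDiff
open MeasureTheory Filter

noncomputable section
open scoped Classical
namespace RotorRouterPaper

/-!
The maximum of `ē` over `n`-point sets is attained: `e_x(A)` depends only on the connected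
component of `x` in `A`, a translate of which lies in the cube `[-(n-1), n-1]^d`, leaving finitely
many candidates, and since `ē` is monotone a candidate can be padded to exactly `n` points.
Among the maximizers take one minimizing `∑_{x ∈ A} ‖x‖₁`. If it is not orthoconvex, some
axis-parallel line has a gap; after a coordinate reflection the gap lies on the nonnegative side,
and polarizing across the hyperplane just below the next point of `A` beyond the gap keeps `|A|`,
does not decrease `ē` (two-point rearrangement inequalities, proved by the maximum principle)
and strictly decreases the moment.
-/

variable {d : ℕ}

def neighborSum (d : ℕ) : (Site d → ℝ) →ₗ[ℝ] Site d → ℝ where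
  toFun e x := ∑ i, (e (x + unitVec d i) + e (x - unitVec d i))
  map_add' e f := by
    ext x
    simp only [Pi.add_apply, ← Finset.sum_add_distrib]
    exact Finset.sum_congr rfl fun _ _ => by ring
  map_smul' c e := by
    ext x
    simp only [Pi.smul_apply, smul_eq_mul, RingHom.id_apply, Finset.mul_sum, mul_add]

lemma neighborSum_apply (e : Site d → ℝ) (x : Site d) :
    neighborSum d e x = ∑ i, (e (x + unitVec d i) + e (x - unitVec d i)) := rfl

lemma isExitFun_iff (hd : 1 ≤ d) {A : Set (Site d)} {e : Site d → ℝ} :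
    IsExitFun d A e ↔
      (∀ x ∉ A, e x = 0) ∧ ∀ x ∈ A, neighborSum d e x = 2 * d * (e x - 1) := by
  have hd' : (2 * d : ℝ) ≠ 0 := by positivity
  refine and_congr_right fun _ => forall₂_congr fun x _ => ?_
  rw [← neighborSum_apply]
  constructor <;> intro h
  · field_simp at h
    linarith
  · rw [h]
    field_simp
    ring

lemma le_of_two_mul_le_neighborSum {F : Site d → ℝ} {y : Site d} {M : ℝ}
    (hplus : ∀ m, F (y + unitVec d m) ≤ M) (hminus : ∀ m, F (y - unitVec d m) ≤ M)
    (hsum : 2 * d * M ≤ neighborSum d F y) (i : Fin d) : M ≤ F (y - unitVec d i) := by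
  set g : Fin d → ℝ := fun m => 2 * M - (F (y + unitVec d m) + F (y - unitVec d m))
  have hg : g i ≤ ∑ m, g m :=
    Finset.single_le_sum (fun m _ => by linarith [hplus m, hminus m]) (Finset.mem_univ i)
  have hsum_g : ∑ m, g m = 2 * d * M - neighborSum d F y := by
    simp only [g, Finset.sum_sub_distrib, Finset.sum_const, Finset.card_univ, Fintype.card_fin,
      nsmul_eq_mul, neighborSum_apply]
    ring
  linarith [hplus i]

lemma finite_range_of_finite_support {α M : Type*} [Zero M] {F : α → M}
    (hF : (Function.support F).Finite) : (Set.range F).Finite := by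
  refine ((hF.image F).insert 0).subset ?_
  rintro _ ⟨x, rfl⟩
  by_cases hx : F x = 0
  · exact Or.inl hx
  · exact Or.inr ⟨x, hx, rfl⟩

lemma le_zero_of_max_propagates {F : Site d → ℝ} (hF : (Function.support F).Finite) (i : Fin d)
    (h : ∀ y, 0 < F y → (∀ z, F z ≤ F y) → F y ≤ F (y - unitVec d i)) (x : Site d) :
    F x ≤ 0 := by
  by_contra! hx
  obtain ⟨_, ⟨y₀, rfl⟩, hy₀⟩ := Set.exists_max_image (Set.range F) id
    (finite_range_of_finite_support hF) (Set.range_nonempty F)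
  have hmax : ∀ z, F z ≤ F y₀ := fun z => hy₀ _ ⟨z, rfl⟩
  have hpos : 0 < F y₀ := hx.trans_le (hmax x)
  have hS : {y | F y = F y₀}.Finite :=
    hF.subset fun y (hy : F y = F y₀) => by simp [hy, hpos.ne']
  obtain ⟨y, hy, hymin⟩ := Set.exists_min_image _ (fun y => y i) hS ⟨y₀, rfl⟩
  have hy' : F y = F y₀ := hy
  have hnext : F (y - unitVec d i) = F y₀ :=
    le_antisymm (hmax _) (hy' ▸ h y (hy' ▸ hpos) (hy' ▸ hmax))
  have := hymin _ hnext
  simp [unitVec] at this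

lemma le_zero_of_subharmonic (hd : 1 ≤ d) {F : Site d → ℝ} (hF : (Function.support F).Finite)
    (h : ∀ x, 0 < F x → 2 * d * F x ≤ neighborSum d F x) (x : Site d) : F x ≤ 0 :=
  le_zero_of_max_propagates hF ⟨0, hd⟩
    (fun y hy hmax => le_of_two_mul_le_neighborSum (fun _ => hmax _) (fun _ => hmax _) (h y hy) _)
    x

lemma le_zero_of_harmonicOn (hd : 1 ≤ d) {A : Set (Site d)} (hA : A.Finite) {F : Site d → ℝ}
    (hout : ∀ x ∉ A, F x = 0) (hin : ∀ x ∈ A, neighborSum d F x = 2 * d * F x)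
    (x : Site d) : F x ≤ 0 :=
  le_zero_of_subharmonic hd (hA.subset fun _ hy => by_contra fun h => hy (hout _ h))
    (fun y hy => (hin y (by_contra fun h => hy.ne' (hout y h))).ge) x

lemma eq_zero_of_harmonicOn (hd : 1 ≤ d) {A : Set (Site d)} (hA : A.Finite) {F : Site d → ℝ}
    (hout : ∀ x ∉ A, F x = 0) (hin : ∀ x ∈ A, neighborSum d F x = 2 * d * F x) : F = 0 := by
  funext x
  refine le_antisymm (le_zero_of_harmonicOn hd hA hout hin x) (neg_nonpos.mp ?_)
  exact le_zero_of_harmonicOn hd hA (F := -F) (by simpa using hout) (by simpa using hin) x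

section ExitFun

variable {A B : Set (Site d)}

lemma exists_isExitFun (hd : 1 ≤ d) (hA : A.Finite) : ∃ e, IsExitFun d A e := by
  have := hA.to_subtype
  set E := Function.ExtendByZero.linearMap ℝ (Subtype.val : A → Site d)
  have E_out : ∀ f x, x ∉ A → E f x = 0 := fun f x hx =>
    Function.extend_apply' _ _ _ fun ⟨a, ha⟩ => hx (ha ▸ a.2)
  have E_in : ∀ f (a : A), E f a = f a := fun f a =>
    Subtype.val_injective.extend_apply _ _ _
  -- `T` is injective by the maximum principle, hence surjective in finite dimension
  set T := LinearMap.funLeft ℝ ℝ (Subtype.val : A → Site d) ∘ₗ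
    (neighborSum d - (2 * d : ℝ) • LinearMap.id) ∘ₗ E
  have hT : ∀ f (a : A), T f a = neighborSum d (E f) a - 2 * d * E f a := fun _ _ => rfl
  have hinj : Function.Injective T := by
    rw [← LinearMap.ker_eq_bot, LinearMap.ker_eq_bot']
    intro f hf
    have hzero : E f = 0 := eq_zero_of_harmonicOn hd hA (E_out f) fun x hx => by
      have := congrFun hf ⟨x, hx⟩
      rw [hT] at this
      simpa [sub_eq_zero] using this
    funext a
    simpa [E_in] using congrFun hzero a
  obtain ⟨f, hf⟩ := LinearMap.injective_iff_surjective.mp hinj (fun _ => -(2 * d))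
  refine ⟨E f, (isExitFun_iff hd).mpr ⟨E_out f, fun x hx => ?_⟩⟩
  have := congrFun hf ⟨x, hx⟩
  rw [hT] at this
  linarith

lemma IsExitFun.eq (hd : 1 ≤ d) (hA : A.Finite) {e e' : Site d → ℝ} (he : IsExitFun d A e)
    (he' : IsExitFun d A e') : e = e' := by
  rw [isExitFun_iff hd] at he he'
  have := eq_zero_of_harmonicOn hd hA (F := e - e') (fun x hx => by simp [he.1 x hx, he'.1 x hx])
    fun x hx => by simp only [map_sub, Pi.sub_apply, he.2 x hx, he'.2 x hx]; ring
  exact sub_eq_zero.mp this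

lemma isExitFun_exitFun (hd : 1 ≤ d) (hA : A.Finite) : IsExitFun d A (exitFun d A) := by
  have h := exists_isExitFun hd hA
  rw [exitFun, dif_pos h]
  exact h.choose_spec

lemma exitFun_eq (hd : 1 ≤ d) (hA : A.Finite) {e : Site d → ℝ} (he : IsExitFun d A e) :
    exitFun d A = e :=
  (isExitFun_exitFun hd hA).eq hd hA he

lemma exitFun_eq_zero (hd : 1 ≤ d) (hA : A.Finite) {x : Site d} (hx : x ∉ A) :
    exitFun d A x = 0 :=
  (isExitFun_exitFun hd hA).1 x hx

lemma neighborSum_exitFun (hd : 1 ≤ d) (hA : A.Finite) {x : Site d} (hx : x ∈ A) :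
    neighborSum d (exitFun d A) x = 2 * d * (exitFun d A x - 1) :=
  ((isExitFun_iff hd).mp (isExitFun_exitFun hd hA)).2 x hx

lemma exitFun_nonneg (hd : 1 ≤ d) (hA : A.Finite) (x : Site d) : 0 ≤ exitFun d A x := by
  have hmem : ∀ {y}, exitFun d A y ≠ 0 → y ∈ A := fun hy =>
    by_contra fun h => hy (exitFun_eq_zero hd hA h)
  refine neg_nonpos.mp (le_zero_of_subharmonic hd (F := -exitFun d A)
    (hA.subset fun y hy => hmem (by simpa using hy)) (fun y hy => ?_) x)
  have hyA : y ∈ A := hmem (by simp at hy; exact hy.ne)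
  simp only [map_neg, Pi.neg_apply, neighborSum_exitFun hd hA hyA]
  nlinarith [show (0 : ℝ) ≤ d by positivity]

lemma exitFun_mono (hd : 1 ≤ d) (hB : B.Finite) (hAB : A ⊆ B) (x : Site d) :
    exitFun d A x ≤ exitFun d B x := by
  have hA := hB.subset hAB
  have hmem : ∀ {y}, exitFun d B y < exitFun d A y → y ∈ A := fun {y} hy =>
    by_contra fun h => by linarith [exitFun_eq_zero hd hA h, exitFun_nonneg hd hB y]
  refine sub_nonpos.mp (le_zero_of_subharmonic hd (F := exitFun d A - exitFun d B) ?_ ?_ x)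
  · refine hB.subset fun y hy => by_contra fun h => hy ?_
    simp [exitFun_eq_zero hd hB h, exitFun_eq_zero hd hA (fun h' => h (hAB h'))]
  · intro y hy
    have hyA := hmem (sub_pos.mp hy)
    simp only [map_sub, Pi.sub_apply, neighborSum_exitFun hd hA hyA,
      neighborSum_exitFun hd hB (hAB hyA)]
    linarith

end ExitFun

section Ebar

variable {A B : Set (Site d)}

lemma finite_range_exitFun (hd : 1 ≤ d) (hA : A.Finite) : (Set.range (exitFun d A)).Finite :=
  finite_range_of_finite_support <| hA.subset fun _ hx =>
    by_contra fun h => hx (exitFun_eq_zero hd hA h)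

lemma exitFun_le_ebar (hd : 1 ≤ d) (hA : A.Finite) (x : Site d) : exitFun d A x ≤ ebar d A :=
  le_csSup (finite_range_exitFun hd hA).bddAbove ⟨x, rfl⟩

lemma ebar_le {c : ℝ} (h : ∀ x, exitFun d A x ≤ c) : ebar d A ≤ c :=
  csSup_le (Set.range_nonempty _) (Set.forall_mem_range.mpr h)

lemma ebar_nonneg (hd : 1 ≤ d) (hA : A.Finite) : 0 ≤ ebar d A :=
  (exitFun_nonneg hd hA 0).trans (exitFun_le_ebar hd hA 0)

lemma ebar_mono (hd : 1 ≤ d) (hB : B.Finite) (hAB : A ⊆ B) : ebar d A ≤ ebar d B :=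
  ebar_le fun x => (exitFun_mono hd hB hAB x).trans (exitFun_le_ebar hd hB x)

end Ebar

section Symmetry

def MapsAxisNeighbors (Φ : Site d → Site d) : Prop :=
  ∀ x m,
    (Φ (x + unitVec d m) = Φ x + unitVec d m ∧ Φ (x - unitVec d m) = Φ x - unitVec d m) ∨
    (Φ (x + unitVec d m) = Φ x - unitVec d m ∧ Φ (x - unitVec d m) = Φ x + unitVec d m)

variable {Φ : Site d → Site d} {A : Set (Site d)}

lemma MapsAxisNeighbors.neighborSum_comp (hΦ : MapsAxisNeighbors Φ) (f : Site d → ℝ)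
    (x : Site d) : neighborSum d (f ∘ Φ) x = neighborSum d f (Φ x) := by
  simp only [neighborSum_apply]
  refine Finset.sum_congr rfl fun m _ => ?_
  rcases hΦ x m with ⟨h₁, h₂⟩ | ⟨h₁, h₂⟩ <;> simp only [Function.comp, h₁, h₂]
  ring

lemma MapsAxisNeighbors.exitFun_preimage (hd : 1 ≤ d) (hΦ : MapsAxisNeighbors Φ)
    (hinj : Function.Injective Φ) (hA : A.Finite) :
    exitFun d (Φ ⁻¹' A) = exitFun d A ∘ Φ := by
  refine exitFun_eq hd (hA.preimage hinj.injOn) ((isExitFun_iff hd).mpr ⟨?_, fun x hx => ?_⟩)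
  · exact fun x hx => exitFun_eq_zero hd hA hx
  · rw [hΦ.neighborSum_comp]
    exact neighborSum_exitFun hd hA hx

lemma MapsAxisNeighbors.ebar_preimage (hd : 1 ≤ d) (hΦ : MapsAxisNeighbors Φ)
    (hbij : Function.Bijective Φ) (hA : A.Finite) : ebar d (Φ ⁻¹' A) = ebar d A := by
  rw [ebar, ebar, hΦ.exitFun_preimage hd hbij.1 hA, hbij.2.range_comp]

lemma mapsAxisNeighbors_add_right (v : Site d) : MapsAxisNeighbors (· + v) :=
  fun _ _ => Or.inl ⟨add_right_comm _ _ _, sub_add_eq_add_sub _ _ _⟩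

def reflect (i : Fin d) (s : ℤ) (x : Site d) : Site d := Function.update x i (s - x i)

variable {i : Fin d} {s : ℤ}

@[simp] lemma reflect_apply_self (x : Site d) : reflect i s x i = s - x i := by simp [reflect]

lemma reflect_apply_of_ne {j : Fin d} (h : j ≠ i) (x : Site d) : reflect i s x j = x j := by
  simp [reflect, h]

lemma reflect_involutive : Function.Involutive (reflect i s) := fun x => by
  ext j
  by_cases h : j = i
  · subst h; simp
  · simp [reflect_apply_of_ne h]

lemma reflect_add_smul_unitVec_self (x : Site d) (c : ℤ) :
    reflect i s (x + c • unitVec d i) = reflect i s x - c • unitVec d i := by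
  ext k
  by_cases hk : k = i
  · subst hk; simp [unitVec]; ring
  · simp [reflect_apply_of_ne hk, unitVec, hk]

lemma reflect_add_smul_unitVec_of_ne {j : Fin d} (hj : j ≠ i) (x : Site d) (c : ℤ) :
    reflect i s (x + c • unitVec d j) = reflect i s x + c • unitVec d j := by
  ext k
  by_cases hk : k = i
  · subst hk; simp [unitVec, Ne.symm hj]
  · simp [reflect_apply_of_ne hk]

lemma mapsAxisNeighbors_reflect : MapsAxisNeighbors (reflect i s) := by
  intro x m
  by_cases h : m = i
  · subst h
    have hself := reflect_add_smul_unitVec_self (i := m) (s := s) x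
    exact Or.inr ⟨by simpa using hself 1, by simpa [sub_eq_add_neg] using hself (-1)⟩
  · have hne := reflect_add_smul_unitVec_of_ne (s := s) h x
    exact Or.inl ⟨by simpa using hne 1, by simpa [sub_eq_add_neg] using hne (-1)⟩

lemma reflect_eq_add_unitVec {ℓ : ℤ} {y : Site d} (hy : y i = ℓ) :
    reflect i (2 * ℓ + 1) y = y + unitVec d i := by
  ext k
  by_cases hk : k = i
  · subst hk; simp [unitVec, hy]; ring
  · simp [reflect_apply_of_ne hk, unitVec, hk]

end Symmetry

section Component

variable {A K : Set (Site d)}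

lemma exitFun_eq_indicator (hd : 1 ≤ d) (hA : A.Finite) (hKA : K ⊆ A)
    (hK : ∀ z ∈ K, ∀ m, (z + unitVec d m ∈ A → z + unitVec d m ∈ K) ∧
      (z - unitVec d m ∈ A → z - unitVec d m ∈ K)) :
    exitFun d K = K.indicator (exitFun d A) := by
  have hagree : ∀ w, (w ∈ A → w ∈ K) → K.indicator (exitFun d A) w = exitFun d A w := by
    intro w hw
    by_cases hwK : w ∈ K
    · exact Set.indicator_of_mem hwK _
    · rw [Set.indicator_of_notMem hwK, exitFun_eq_zero hd hA (mt hw hwK)]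
  refine exitFun_eq hd (hA.subset hKA) ((isExitFun_iff hd).mpr
    ⟨fun x hx => Set.indicator_of_notMem hx _, fun x hx => ?_⟩)
  rw [Set.indicator_of_mem hx, ← neighborSum_exitFun hd hA (hKA hx)]
  simp only [neighborSum_apply]
  exact Finset.sum_congr rfl fun m _ => by rw [hagree _ (hK x hx m).1, hagree _ (hK x hx m).2]

def component (A : Set (Site d)) (x : Site d) : Set (Site d) :=
  {y | y ∈ A ∧ Relation.ReflTransGen
    (fun p q => q ∈ A ∧ ∃ m, q = p + unitVec d m ∨ q = p - unitVec d m) x y}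

lemma component_subset (x : Site d) : component A x ⊆ A := fun _ h => h.1

lemma mem_component_self {x : Site d} (hx : x ∈ A) : x ∈ component A x :=
  ⟨hx, .refl⟩

lemma exitFun_component (hd : 1 ≤ d) (hA : A.Finite) (x : Site d) :
    exitFun d (component A x) = (component A x).indicator (exitFun d A) :=
  exitFun_eq_indicator hd hA (component_subset x) fun _ hz m =>
    ⟨fun h => ⟨h, hz.2.tail ⟨h, m, .inl rfl⟩⟩,
      fun h => ⟨h, hz.2.tail ⟨h, m, .inr rfl⟩⟩⟩

lemma uIcc_subset_image_component {x y : Site d} (hx : x ∈ A) (hy : y ∈ component A x)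
    (j : Fin d) : Set.uIcc (x j) (y j) ⊆ (fun z => z j) '' component A x := by
  induction hy.2 with
  | refl => simpa using ⟨x, mem_component_self hx, rfl⟩
  | @tail b c hxb hbc ih =>
    intro t ht
    have hstep : c j = b j - 1 ∨ c j = b j ∨ c j = b j + 1 := by
      obtain ⟨m, rfl | rfl⟩ := hbc.2 <;> by_cases h : j = m <;> simp [unitVec, h]
    by_cases hc : t = c j
    · exact ⟨c, ⟨hbc.1, hxb.tail hbc⟩, hc.symm⟩
    · have hbA : b ∈ A := by
        rcases hxb.cases_tail with rfl | ⟨_, _, hab⟩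
        exacts [hx, hab.1]
      refine ih ⟨hbA, hxb⟩ ?_
      rw [Set.mem_uIcc] at ht ⊢
      omega

lemma natAbs_sub_lt_ncard_component (hA : A.Finite) {x y : Site d} (hx : x ∈ A)
    (hy : y ∈ component A x) (j : Fin d) : (y j - x j).natAbs < (component A x).ncard := by
  have hfin := hA.subset (component_subset x)
  calc (y j - x j).natAbs < (Set.uIcc (x j) (y j)).ncard := by
        rw [← Finset.coe_uIcc, Set.ncard_coe_finset, Int.card_uIcc]; omega
    _ ≤ ((fun z => z j) '' component A x).ncard :=
        Set.ncard_le_ncard (uIcc_subset_image_component hx hy j) (hfin.image _)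
    _ ≤ (component A x).ncard := Set.ncard_image_le hfin

lemma exists_subset_cubeSet_exitFun_eq (hd : 1 ≤ d) (hA : A.Finite) {x : Site d} (hx : x ∈ A) :
    ∃ K ⊆ cubeSet d (A.ncard - 1), K.Finite ∧ K.ncard ≤ A.ncard ∧
      exitFun d A x = exitFun d K 0 := by
  have hC := hA.subset (component_subset x)
  have hCA := Set.ncard_le_ncard (component_subset x) hA
  refine ⟨(· + x) ⁻¹' component A x, fun z hz j => ?_,
    hC.preimage (add_left_injective x).injOn, ?_, ?_⟩
  · have := natAbs_sub_lt_ncard_component hA hx hz j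
    simp only [Pi.add_apply, add_sub_cancel_right] at this
    rw [abs_le]
    omega
  · rwa [Set.ncard_preimage_of_injective_subset_range (add_left_injective x)
      (fun y _ => ⟨y - x, sub_add_cancel y x⟩)]
  · rw [(mapsAxisNeighbors_add_right x).exitFun_preimage hd (add_left_injective x) hC,
      Function.comp_apply, zero_add, exitFun_component hd hA, Set.indicator_of_mem
      (mem_component_self hx)]

end Component

lemma finite_cubeSet (r : ℕ) : (cubeSet d r).Finite :=
  (Set.finite_Icc (fun _ => -(r : ℤ)) fun _ => (r : ℤ)).subset fun _ hx =>
    ⟨fun j => (abs_le.mp (hx j)).1, fun j => (abs_le.mp (hx j)).2⟩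

lemma exists_ebar_max (hd : 1 ≤ d) (n : ℕ) : ∃ B : Set (Site d), B.Finite ∧ B.ncard = n ∧
    ∀ A : Set (Site d), A.Finite → A.ncard = n → ebar d A ≤ ebar d B := by
  set 𝒜 := {K : Set (Site d) | K ⊆ cubeSet d (n - 1) ∧ K.ncard ≤ n}
  have h𝒜 : 𝒜.Finite := (finite_cubeSet (n - 1)).finite_subsets.subset fun _ hK => hK.1
  obtain ⟨B₀, ⟨hB₀cube, hB₀n⟩, hB₀max⟩ :=
    Set.exists_max_image 𝒜 (ebar d) h𝒜 ⟨∅, Set.empty_subset _, by simp⟩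
  have hB₀ : B₀.Finite := (finite_cubeSet _).subset hB₀cube
  have : Infinite (Site d) := Pi.infinite_of_exists_right (⟨0, hd⟩ : Fin d)
  obtain ⟨B, hB₀B, hBn⟩ := Infinite.exists_superset_card_eq hB₀.toFinset n
    (by rwa [← Set.ncard_eq_toFinset_card _ hB₀])
  refine ⟨B, B.finite_toSet, by rwa [Set.ncard_coe_finset], fun A hA hAn => ?_⟩
  refine ebar_le fun x => le_trans ?_ (ebar_mono hd B.finite_toSet
    (fun y hy => hB₀B (hB₀.mem_toFinset.mpr hy)))
  by_cases hx : x ∈ A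
  · obtain ⟨K, hKcube, hK, hKn, hxK⟩ := exists_subset_cubeSet_exitFun_eq hd hA hx
    rw [hAn] at hKcube hKn
    rw [hxK]
    exact (exitFun_le_ebar hd hK 0).trans (hB₀max K ⟨hKcube, hKn⟩)
  · rw [exitFun_eq_zero hd hA hx]
    exact ebar_nonneg hd hB₀

section Polarization

variable {A : Set (Site d)} {i : Fin d} {ℓ : ℤ}

/-- Polarization of `A` in the hyperplane `x i = ℓ + 1/2`. -/
def polarMove (i : Fin d) (ℓ : ℤ) (A : Set (Site d)) (u : Site d) : Site d :=
  if ℓ < u i ∧ reflect i (2 * ℓ + 1) u ∉ A then reflect i (2 * ℓ + 1) u else u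

def polarize (i : Fin d) (ℓ : ℤ) (A : Set (Site d)) : Set (Site d) := polarMove i ℓ A '' A

lemma mem_polarize_of_le {z : Site d} (hz : z i ≤ ℓ) :
    z ∈ polarize i ℓ A ↔ z ∈ A ∨ reflect i (2 * ℓ + 1) z ∈ A := by
  constructor
  · rintro ⟨u, hu, rfl⟩
    unfold polarMove
    split_ifs
    · exact Or.inr (by rwa [reflect_involutive])
    · exact Or.inl hu
  · intro h
    by_cases hzA : z ∈ A
    · exact ⟨z, hzA, if_neg fun hc => by omega⟩
    · refine ⟨_, h.resolve_left hzA, ?_⟩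
      rw [polarMove, if_pos ⟨by simp; omega, by rwa [reflect_involutive]⟩, reflect_involutive]

lemma mem_polarize_of_lt {z : Site d} (hz : ℓ < z i) :
    z ∈ polarize i ℓ A ↔ z ∈ A ∧ reflect i (2 * ℓ + 1) z ∈ A := by
  constructor
  · rintro ⟨u, hu, rfl⟩
    unfold polarMove at hz ⊢
    split_ifs at hz ⊢ with hmove
    · simp at hz; omega
    · exact ⟨hu, by_contra fun h => hmove ⟨hz, h⟩⟩
  · exact fun h => ⟨z, h.1, if_neg fun hc => hc.2 h.2⟩

lemma polarMove_injOn : Set.InjOn (polarMove i ℓ A) A := by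
  intro u hu v hv huv
  unfold polarMove at huv
  split_ifs at huv with hu' hv' hv'
  · exact reflect_involutive.injective huv
  · exact absurd (huv ▸ hv) hu'.2
  · exact absurd (huv ▸ hu) hv'.2
  · exact huv

lemma ncard_polarize : (polarize i ℓ A).ncard = A.ncard :=
  polarMove_injOn.ncard_image

/-- `polarDefect ≤ 0` says `max (e z) (e z*) ≤ e' z` and `e z + e z* ≤ e' z + e' z*` for `z`
below the mirror, `z*` its image. -/
def polarDefect (i : Fin d) (ℓ : ℤ) (e e' : Site d → ℝ) (z : Site d) : ℝ :=
  if z i ≤ ℓ then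
    max (max (e z) (e (reflect i (2 * ℓ + 1) z)) - e' z)
      (e z + e (reflect i (2 * ℓ + 1) z) - (e' z + e' (reflect i (2 * ℓ + 1) z)))
  else 0

variable {e e' : Site d → ℝ} {z : Site d}

lemma polarDefect_of_lt (hz : ℓ < z i) : polarDefect i ℓ e e' z = 0 :=
  if_neg (not_le.mpr hz)

lemma max_sub_le_polarDefect (hz : z i ≤ ℓ) :
    max (e z) (e (reflect i (2 * ℓ + 1) z)) - e' z ≤ polarDefect i ℓ e e' z := by
  rw [polarDefect, if_pos hz]
  exact le_max_left _ _

lemma add_sub_le_polarDefect (hz : z i ≤ ℓ) :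
    e z + e (reflect i (2 * ℓ + 1) z) - (e' z + e' (reflect i (2 * ℓ + 1) z)) ≤
      polarDefect i ℓ e e' z := by
  rw [polarDefect, if_pos hz]
  exact le_max_right _ _

lemma le_polarDefect_sub_unitVec_of_dominated {Φ : Site d → ℝ} {y : Site d} (hy : y i ≤ ℓ)
    (hmax : ∀ z, polarDefect i ℓ e e' z ≤ polarDefect i ℓ e e' y)
    (hnear : ∀ w, w i ≤ ℓ → Φ w ≤ polarDefect i ℓ e e' w)
    (hcross : y i = ℓ → Φ (y + unitVec d i) ≤ polarDefect i ℓ e e' y)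
    (hsum : 2 * d * polarDefect i ℓ e e' y ≤ neighborSum d Φ y) :
    polarDefect i ℓ e e' y ≤ polarDefect i ℓ e e' (y - unitVec d i) := by
  have hminus : ∀ m, (y - unitVec d m) i ≤ ℓ := fun m => by
    simp only [Pi.sub_apply, unitVec]; split_ifs <;> omega
  have hplus : ∀ m, Φ (y + unitVec d m) ≤ polarDefect i ℓ e e' y := fun m => by
    by_cases h : (y + unitVec d m) i ≤ ℓ
    · exact (hnear _ h).trans (hmax _)
    · have hm : m = i := by by_contra hm; simp [unitVec, Ne.symm hm] at h; omega
      subst hm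
      exact hcross (by simp [unitVec] at h; omega)
  exact (le_of_two_mul_le_neighborSum hplus (fun m => (hnear _ (hminus m)).trans (hmax _))
    hsum i).trans (hnear _ (hminus i))

lemma finite_support_polarDefect (hA : A.Finite) (he : IsExitFun d A e)
    (he' : IsExitFun d (polarize i ℓ A) e') :
    (Function.support (polarDefect i ℓ e e')).Finite := by
  have hσ := (reflect_involutive (i := i) (s := 2 * ℓ + 1)).injective
  refine (hA.union (hA.preimage hσ.injOn)).subset fun z hz => ?_
  by_contra hzA
  simp only [Set.mem_union, Set.mem_preimage, not_or] at hzA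
  refine hz ?_
  by_cases hzi : z i ≤ ℓ
  · have h₁ : z ∉ polarize i ℓ A := by simp [mem_polarize_of_le hzi, hzA.1, hzA.2]
    have h₂ : reflect i (2 * ℓ + 1) z ∉ polarize i ℓ A := by
      rw [mem_polarize_of_lt (by simp; omega)]
      exact fun h => hzA.2 h.1
    simp [polarDefect, hzi, he.1 _ hzA.1, he.1 _ hzA.2, he'.1 _ h₁, he'.1 _ h₂]
  · exact polarDefect_of_lt (not_le.mp hzi)

lemma le_polarDefect_sub_unitVec_of_eq_sub (hd : 1 ≤ d) (hA : A.Finite) (he : IsExitFun d A e)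
    (he' : IsExitFun d (polarize i ℓ A) e') {f : Site d → ℝ} {y : Site d} (hy : y i ≤ ℓ)
    (hmax : ∀ z, polarDefect i ℓ e e' z ≤ polarDefect i ℓ e e' y)
    (hpos : 0 < polarDefect i ℓ e e' y)
    (hf_le : ∀ w, f w ≤ max (e w) (e (reflect i (2 * ℓ + 1) w)))
    (hf_pair : f y + f (reflect i (2 * ℓ + 1) y) = e y + e (reflect i (2 * ℓ + 1) y))
    (hGf : polarDefect i ℓ e e' y = f y - e' y)
    (hf_sum : 0 < f y → neighborSum d f y = 2 * d * (f y - 1)) :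
    polarDefect i ℓ e e' y ≤ polarDefect i ℓ e e' (y - unitVec d i) := by
  have hA' : (polarize i ℓ A).Finite := hA.image _
  have he'_nonneg : 0 ≤ e' y := exitFun_eq hd hA' he' ▸ exitFun_nonneg hd hA' y
  have hfy : 0 < f y := by linarith
  have hyA' : y ∈ polarize i ℓ A := by
    rw [mem_polarize_of_le hy]
    by_contra! h
    have := hf_le y
    rw [he.1 _ h.1, he.1 _ h.2, max_self] at this
    linarith
  refine le_polarDefect_sub_unitVec_of_dominated (Φ := f - e') hy hmax
    (fun w hw => (sub_le_sub_right (hf_le w) _).trans (max_sub_le_polarDefect hw))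
    (fun h => ?_) ?_
  · have := add_sub_le_polarDefect (e := e) (e' := e') hy
    simp only [Pi.sub_apply, ← reflect_eq_add_unitVec h] at hf_pair ⊢
    linarith
  · simp only [map_sub, Pi.sub_apply, hf_sum hfy, ((isExitFun_iff hd).mp he').2 y hyA', hGf]
    linarith

lemma le_polarDefect_sub_unitVec_of_eq_add_sub (hd : 1 ≤ d) (he : IsExitFun d A e)
    (he' : IsExitFun d (polarize i ℓ A) e') {y : Site d} (hy : y i ≤ ℓ)
    (hmax : ∀ z, polarDefect i ℓ e e' z ≤ polarDefect i ℓ e e' y)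
    (hboth : y ∈ A ∧ reflect i (2 * ℓ + 1) y ∈ A)
    (hGh : polarDefect i ℓ e e' y =
      e y + e (reflect i (2 * ℓ + 1) y) - (e' y + e' (reflect i (2 * ℓ + 1) y))) :
    polarDefect i ℓ e e' y ≤ polarDefect i ℓ e e' (y - unitVec d i) := by
  have he_sum := ((isExitFun_iff hd).mp he).2
  have he'_sum := ((isExitFun_iff hd).mp he').2
  have hσσ : reflect i (2 * ℓ + 1) (reflect i (2 * ℓ + 1) y) = y := reflect_involutive y
  have hyA' : y ∈ polarize i ℓ A := (mem_polarize_of_le hy).mpr (Or.inl hboth.1)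
  have hσyA' : reflect i (2 * ℓ + 1) y ∈ polarize i ℓ A :=
    (mem_polarize_of_lt (by simp; omega)).mpr ⟨hboth.2, hσσ.symm ▸ hboth.1⟩
  refine le_polarDefect_sub_unitVec_of_dominated
    (Φ := e + e ∘ reflect i (2 * ℓ + 1) - (e' + e' ∘ reflect i (2 * ℓ + 1))) hy hmax
    (fun w hw => add_sub_le_polarDefect hw) (fun h => ?_) ?_
  · simp only [Pi.sub_apply, Pi.add_apply, Function.comp, ← reflect_eq_add_unitVec h, hσσ, hGh]
    linarith
  · simp only [map_sub, map_add, Pi.sub_apply, Pi.add_apply,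
      mapsAxisNeighbors_reflect.neighborSum_comp, he_sum _ hboth.1, he_sum _ hboth.2,
      he'_sum _ hyA', he'_sum _ hσyA', hGh]
    linarith

lemma polarDefect_le_polarDefect_sub_unitVec (hd : 1 ≤ d) (hA : A.Finite)
    (he : IsExitFun d A e) (he' : IsExitFun d (polarize i ℓ A) e') {y : Site d}
    (hpos : 0 < polarDefect i ℓ e e' y)
    (hmax : ∀ z, polarDefect i ℓ e e' z ≤ polarDefect i ℓ e e' y) :
    polarDefect i ℓ e e' y ≤ polarDefect i ℓ e e' (y - unitVec d i) := by
  have hy : y i ≤ ℓ := not_lt.mp fun h => hpos.ne' (polarDefect_of_lt h)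
  have he_sum := ((isExitFun_iff hd).mp he).2
  have hσσ : reflect i (2 * ℓ + 1) (reflect i (2 * ℓ + 1) y) = y := reflect_involutive y
  set a := e y
  set b := e (reflect i (2 * ℓ + 1) y)
  have hGy : polarDefect i ℓ e e' y =
      max (max a b - e' y) (a + b - (e' y + e' (reflect i (2 * ℓ + 1) y))) := if_pos hy
  by_cases hg : polarDefect i ℓ e e' y = max a b - e' y
  · rcases le_total b a with h | h
    · refine le_polarDefect_sub_unitVec_of_eq_sub hd hA he he' hy hmax hpos
        (fun _ => le_max_left _ _) rfl (by rwa [max_eq_left h] at hg)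
        fun hf => he_sum y (by_contra fun hyA => hf.ne' (he.1 y hyA))
    · refine le_polarDefect_sub_unitVec_of_eq_sub (f := e ∘ reflect i (2 * ℓ + 1)) hd hA he he'
        hy hmax hpos (fun _ => le_max_right _ _)
        (by rw [Function.comp_apply, Function.comp_apply, hσσ, add_comm])
        (by rwa [max_eq_right h] at hg) fun hf => ?_
      rw [mapsAxisNeighbors_reflect.neighborSum_comp]
      exact he_sum _ (by_contra fun hσyA => hf.ne' (he.1 _ hσyA))
  · have hGh := (max_choice _ _).resolve_left (hGy ▸ hg)
    rw [← hGy] at hGh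
    refine le_polarDefect_sub_unitVec_of_eq_add_sub hd he he' hy hmax ?_ hGh
    -- otherwise one of `a`, `b` vanishes and the second entry of the `max` is the smaller one
    by_contra h
    refine hg (le_antisymm (hGy ▸ max_le le_rfl ?_) (hGy ▸ le_max_left _ _))
    have := exitFun_eq hd (hA.image _) he' ▸ exitFun_nonneg hd (hA.image _)
      (reflect i (2 * ℓ + 1) y)
    by_cases hyA : y ∈ A
    · have hb : b = 0 := he.1 _ fun h' => h ⟨hyA, h'⟩
      linarith [le_max_left a b]
    · have ha : a = 0 := he.1 _ hyA
      linarith [le_max_right a b]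

end Polarization

lemma ebar_le_ebar_polarize (hd : 1 ≤ d) {A : Set (Site d)} (hA : A.Finite) (i : Fin d)
    (ℓ : ℤ) : ebar d A ≤ ebar d (polarize i ℓ A) := by
  have hA' : (polarize i ℓ A).Finite := hA.image _
  have he := isExitFun_exitFun hd hA
  have he' := isExitFun_exitFun hd hA'
  have hG := le_zero_of_max_propagates (finite_support_polarDefect hA he he') i
    fun y hpos hmax => polarDefect_le_polarDefect_sub_unitVec hd hA he he' hpos hmax
  refine ebar_le fun z => ?_
  rcases le_or_gt (z i) ℓ with hz | hz
  · have := (max_sub_le_polarDefect hz).trans (hG z)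
    exact (le_max_left _ _).trans ((sub_nonpos.mp this).trans (exitFun_le_ebar hd hA' z))
  · have hz' : reflect i (2 * ℓ + 1) z i ≤ ℓ := by simp; omega
    have := (max_sub_le_polarDefect hz').trans (hG _)
    rw [reflect_involutive] at this
    exact (le_max_right _ _).trans ((sub_nonpos.mp this).trans (exitFun_le_ebar hd hA' _))

section Moment

def l1Norm (x : Site d) : ℕ := ∑ j, (x j).natAbs

def l1Moment (A : Set (Site d)) : ℕ := ∑ᶠ x ∈ A, l1Norm x

variable {A : Set (Site d)} {i : Fin d} {ℓ : ℤ}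

lemma l1Norm_reflect_lt {u : Site d} (hℓ : 0 ≤ ℓ) (hu : ℓ < u i) :
    l1Norm (reflect i (2 * ℓ + 1) u) < l1Norm u :=
  Finset.sum_lt_sum (fun j _ => by
      by_cases h : j = i
      · subst h; simp; omega
      · rw [reflect_apply_of_ne h])
    ⟨i, Finset.mem_univ _, by simp; omega⟩

lemma l1Norm_reflect_zero (x : Site d) : l1Norm (reflect i 0 x) = l1Norm x :=
  Finset.sum_congr rfl fun j _ => by
    by_cases h : j = i
    · subst h; simp
    · rw [reflect_apply_of_ne h]

lemma l1Moment_preimage_reflect_zero : l1Moment (reflect i 0 ⁻¹' A) = l1Moment A := by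
  rw [l1Moment, ← reflect_involutive.image_eq_preimage_symm,
    finsum_mem_image reflect_involutive.injective.injOn]
  simp only [l1Norm_reflect_zero, l1Moment]

lemma l1Moment_polarize_lt (hA : A.Finite) (hℓ : 0 ≤ ℓ) {u : Site d} (hu : u ∈ A)
    (hui : ℓ < u i) (hσu : reflect i (2 * ℓ + 1) u ∉ A) :
    l1Moment (polarize i ℓ A) < l1Moment A := by
  rw [l1Moment, polarize, finsum_mem_image polarMove_injOn,
    finsum_mem_eq_finite_toFinset_sum _ hA, l1Moment, finsum_mem_eq_finite_toFinset_sum _ hA]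
  refine Finset.sum_lt_sum (fun v _ => ?_) ⟨u, hA.mem_toFinset.mpr hu, ?_⟩
  · unfold polarMove
    split_ifs with h
    exacts [(l1Norm_reflect_lt hℓ h.1).le, le_rfl]
  · rw [polarMove, if_pos ⟨hui, hσu⟩]
    exact l1Norm_reflect_lt hℓ hui

end Moment

section Orthoconvex

variable {A : Set (Site d)} {i : Fin d}

lemma ncard_preimage_reflect (s : ℤ) : (reflect i s ⁻¹' A).ncard = A.ncard :=
  Set.ncard_preimage_of_injective_subset_range reflect_involutive.injective
    (by simp [reflect_involutive.surjective.range_eq])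

lemma exists_ebar_le_l1Moment_lt_of_gap (hd : 1 ≤ d) (hA : A.Finite) {z : Site d} (hz : z ∉ A)
    (hzi : 0 ≤ z i) {c : ℤ} (hc : 0 < c) (hzc : z + c • unitVec d i ∈ A) :
    ∃ A', A'.Finite ∧ A'.ncard = A.ncard ∧ ebar d A ≤ ebar d A' ∧
      l1Moment A' < l1Moment A := by
  lift c to ℕ using hc.le
  obtain ⟨t, ht, ht1⟩ := Nat.exists_not_and_succ_of_not_zero_of_exists
    (p := fun t : ℕ => z + (t : ℤ) • unitVec d i ∈ A) (by simpa using hz) ⟨c, hzc⟩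
  set y := z + (t : ℤ) • unitVec d i
  have hyi : y i = z i + t := by simp [y, unitVec]
  have hy1 : y + unitVec d i ∈ A := by
    simpa [y, add_smul, add_assoc] using ht1
  refine ⟨polarize i (y i) A, hA.image _, ncard_polarize, ebar_le_ebar_polarize hd hA i _,
    l1Moment_polarize_lt hA (by omega) hy1 (by simp [unitVec]) ?_⟩
  rwa [← reflect_eq_add_unitVec rfl, reflect_involutive]

lemma exists_ebar_le_l1Moment_lt_of_not_orthoconvex (hd : 1 ≤ d) (hA : A.Finite)
    (h : ¬ Orthoconvex d A) :
    ∃ A', A'.Finite ∧ A'.ncard = A.ncard ∧ ebar d A ≤ ebar d A' ∧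
      l1Moment A' < l1Moment A := by
  simp only [Orthoconvex, not_forall, exists_prop] at h
  obtain ⟨x, hx, i, k, hk, hxk, j, hj, hjk, hgap⟩ := h
  rcases le_or_gt 0 (x i + j) with hpos | hneg
  · refine exists_ebar_le_l1Moment_lt_of_gap (i := i) hd hA hgap (by simpa [unitVec] using hpos)
      (c := k - j) (by omega) ?_
    rwa [add_assoc, ← add_smul, add_sub_cancel]
  · have hρ : Function.Bijective (reflect i 0) := reflect_involutive.bijective
    have hz : reflect i 0 (x + j • unitVec d i) ∉ reflect i 0 ⁻¹' A := by
      rwa [Set.mem_preimage, reflect_involutive]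
    have hzi : 0 ≤ reflect i 0 (x + j • unitVec d i) i := by simp [unitVec]; omega
    have hzj :
        reflect i 0 (x + j • unitVec d i) + j • unitVec d i ∈ reflect i 0 ⁻¹' A := by
      rwa [reflect_add_smul_unitVec_self, sub_add_cancel, Set.mem_preimage, reflect_involutive]
    obtain ⟨B', hB', hB'n, hB'ebar, hB'mom⟩ :=
      exists_ebar_le_l1Moment_lt_of_gap hd (hA.preimage hρ.1.injOn) hz hzi hj hzj
    have hebar : ∀ {S : Set (Site d)}, S.Finite → ebar d (reflect i 0 ⁻¹' S) = ebar d S :=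
      mapsAxisNeighbors_reflect.ebar_preimage hd hρ
    refine ⟨reflect i 0 ⁻¹' B', hB'.preimage hρ.1.injOn, ?_, ?_, ?_⟩
    · rw [ncard_preimage_reflect, hB'n, ncard_preimage_reflect]
    · rw [hebar hB', ← hebar hA]
      exact hB'ebar
    · rw [l1Moment_preimage_reflect_zero, ← l1Moment_preimage_reflect_zero (A := A)]
      exact hB'mom

end Orthoconvex

theorem lemma_orthoconvex_general (d n : ℕ) (hd : 1 ≤ d) :
    ∃ A : Set (Site d), A.Finite ∧ A.ncard = n ∧ Orthoconvex d A ∧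
      ∀ A' : Set (Site d), A'.Finite → A'.ncard = n → ebar d A' ≤ ebar d A := by
  obtain ⟨B, hB, hBn, hBmax⟩ := exists_ebar_max hd n
  obtain ⟨A, ⟨hA, hAn, hBA⟩, hAmin⟩ := (measure (l1Moment (d := d))).wf.has_min
    {A | A.Finite ∧ A.ncard = n ∧ ebar d B ≤ ebar d A} ⟨B, hB, hBn, le_rfl⟩
  refine ⟨A, hA, hAn, by_contra fun hconv => ?_,
    fun A' hA' hA'n => (hBmax A' hA' hA'n).trans hBA⟩
  obtain ⟨A', hA', hA'n, hAA', hlt⟩ := exists_ebar_le_l1Moment_lt_of_not_orthoconvex hd hA hconv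
  exact hAmin A' ⟨hA', hA'n.trans hAn, hBA.trans hAA'⟩ hlt

theorem lemma_orthoconvex (d n : ℕ) (hd : 1 ≤ d) (hn : 1 ≤ n) :
    ∃ A : Set (Site d), A.Finite ∧ A.ncard = n ∧ Orthoconvex d A ∧
      ∀ A' : Set (Site d), A'.Finite → A'.ncard = n → ebar d A' ≤ ebar d A :=
  lemma_orthoconvex_general d n hd

end RotorRouterPaper
end
end
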